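/- arXiv:1602.03728 — 3 statements merged into one kernel-verified Lean document; each statement's English description precedes it below -/
import Mathlib

section
/- For any first-order differential operator X (vector field) and any differential operators Y, Z, the associator of the white multiplication satisfies (X, Y, Z)^∘ = (X • Y) ∘ Z, where (X, Y, Z)^∘ = X ∘ (Y ∘ Z) − (X ∘ Y) ∘ Z. -/
/-!
Write `toEnd X` for the endomorphism `w ↦ Σ_α u_α ∂^α w` of the coefficient ring. The white
product acts on the coefficients of its right factor, `(Y ∘ Z)_γ = toEnd Y (Z_γ)`, so the
associator identity reduces to the operator identity
`toEnd X ∘ toEnd Y - toEnd (X ∘ Y) = toEnd (X • Y)`. For `X = u ∂ᵢ` and `Y = v ∂^β` this is the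
Leibniz rule `∂ᵢ (v ∂^β w) = ∂ᵢ v ∂^β w + v ∂^{eᵢ + β} w`. The exponent law
`∂ᵢ ∂^β = ∂^{eᵢ + β}` holds because partial derivatives commute, which makes `α ↦ ∂^α` a
monoid homomorphism (a `noncommPiCoprod` of the powers of the `∂ᵢ`).
-/

open Finsupp

/-- The space of linear differential operators in `n` variables (with polynomial
coefficients over `ℂ`): a formal finite sum `Σ_α u_α ∂^α`. -/
abbrev Diff (n : ℕ) := (Fin n →₀ ℕ) →₀ MvPolynomial (Fin n) ℂ

/-- The operator `∂^α = ∂₁^{α₁} ⋯ ∂ₙ^{αₙ}` acting on coefficient functions. -/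
noncomputable def Dop {n : ℕ} (α : Fin n →₀ ℕ) :
    Module.End ℂ (MvPolynomial (Fin n) ℂ) :=
  (List.ofFn fun i : Fin n => ((MvPolynomial.pderiv i).toLinearMap) ^ (α i)).prod

/-- White multiplication: `(u ∂^α) ∘ (v ∂^β) = u ∂^α(v) ∂^β`, extended bilinearly. -/
noncomputable def white {n : ℕ} (X Y : Diff n) : Diff n :=
  X.sum fun α u => Y.sum fun β v => Finsupp.single β (u * Dop α v)

/-- Black multiplication: `(u ∂^α) • (v ∂^β) = u v ∂^{α+β}`, extended bilinearly. -/
noncomputable def black {n : ℕ} (X Y : Diff n) : Diff n :=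
  X.sum fun α u => Y.sum fun β v => Finsupp.single (α + β) (u * v)

/-- Composition of differential operators:
`(u ∂^α) ⋄ (v ∂^β) = Σ_{γ ≤ α} binom(α,γ) u ∂^γ(v) ∂^{α+β-γ}`, extended bilinearly. -/
noncomputable def diam {n : ℕ} (X Y : Diff n) : Diff n :=
  X.sum fun α u => Y.sum fun β v =>
    ∑ γ ∈ Finset.Iic α,
      Finsupp.single (α + β - γ) (((∏ i, ((α i).choose (γ i)) : ℕ) : ℂ) • (u * Dop γ v))

/-- A differential operator is of first order (a vector field) if it has the
form `Σ_i u_i ∂_i`, i.e. every multi-index in its support has total degree 1. -/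
def IsVect {n : ℕ} (X : Diff n) : Prop :=
  ∀ α ∈ X.support, (α.sum fun _ k => k) = 1

/-- The identity differential operator `1·∂^0`. -/
noncomputable def unitD {n : ℕ} : Diff n := Finsupp.single 0 1

/-- Composition (`⋄`-)power `L^m = L ⋄ ⋯ ⋄ L`. -/
noncomputable def dpow {n : ℕ} (L : Diff n) : ℕ → Diff n
  | 0 => unitD
  | m + 1 => diam L (dpow L m)

/-- Black power `X^{•k} = X • ⋯ • X`. -/
noncomputable def bpow {n : ℕ} (X : Diff n) : ℕ → Diff n
  | 0 => unitD
  | k + 1 => black X (bpow X k)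

namespace MvPolynomial

variable {R σ : Type*} [CommSemiring R]

theorem pderiv_pderiv_comm (i j : σ) (p : MvPolynomial σ R) :
    pderiv i (pderiv j p) = pderiv j (pderiv i p) := by
  classical
  induction p using MvPolynomial.induction_on with
  | C a => simp
  | add p q hp hq => simp [hp, hq]
  | mul_X p k hp =>
    simp only [pderiv_mul, map_add, hp, pderiv_X, Pi.single_apply]
    split_ifs <;> simp [add_right_comm]

theorem commute_pderiv (i j : σ) :
    Commute ((pderiv i).toLinearMap : Module.End R (MvPolynomial σ R)) (pderiv j).toLinearMap :=
  LinearMap.ext (pderiv_pderiv_comm i j)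

end MvPolynomial

open MvPolynomial

section Dop

variable {n : ℕ}

noncomputable def pderivPowers (i : Fin n) :
    Multiplicative ℕ →* Module.End ℂ (MvPolynomial (Fin n) ℂ) :=
  powersHom _ (pderiv i).toLinearMap

theorem pairwise_commute_pderivPowers :
    Pairwise fun i j : Fin n => ∀ x y, Commute (pderivPowers i x) (pderivPowers j y) :=
  fun i j _ x y => (commute_pderiv i j).pow_pow x.toAdd y.toAdd

theorem Dop_eq_noncommPiCoprod (α : Fin n →₀ ℕ) :
    Dop α = MonoidHom.noncommPiCoprod pderivPowers pairwise_commute_pderivPowers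
      (fun i => Multiplicative.ofAdd (α i)) := by
  simp only [MonoidHom.noncommPiCoprod_apply, Finset.noncommProd, Fin.univ_val_map,
    Multiset.noncommProd_coe]
  rfl

theorem Dop_add (α β : Fin n →₀ ℕ) : Dop (α + β) = Dop α * Dop β := by
  simp only [Dop_eq_noncommPiCoprod, ← map_mul]
  rfl

theorem Dop_single (i : Fin n) : Dop (Finsupp.single i 1) = (pderiv i).toLinearMap := by
  classical
  have hsingle : (fun j => Multiplicative.ofAdd (Finsupp.single i 1 j)) =
      Pi.mulSingle (M := fun _ => Multiplicative ℕ) i (Multiplicative.ofAdd 1) := by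
    ext j
    rcases eq_or_ne j i with rfl | h <;> simp [*]
  rw [Dop_eq_noncommPiCoprod, hsingle, MonoidHom.noncommPiCoprod_mulSingle]
  simp [pderivPowers]

end Dop

namespace Diff

variable {n : ℕ}

noncomputable def toEnd : Diff n →ₗ[ℂ] Module.End ℂ (MvPolynomial (Fin n) ℂ) :=
  Finsupp.lsum ℂ fun α => (LinearMap.mulRight ℂ (Dop α)).comp (LinearMap.mul ℂ _)

theorem toEnd_apply (X : Diff n) (w : MvPolynomial (Fin n) ℂ) :
    toEnd X w = X.sum fun α u => u * Dop α w := by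
  simp [toEnd, Finsupp.lsum_apply]

theorem toEnd_eq_sum (X : Diff n) : toEnd X = X.sum fun α u => toEnd (Finsupp.single α u) := by
  conv_lhs => rw [← X.sum_single]
  exact map_finsuppSum _ _ _

theorem toEnd_single_apply (α : Fin n →₀ ℕ) (u w : MvPolynomial (Fin n) ℂ) :
    toEnd (Finsupp.single α u) w = u * Dop α w := by
  simp [toEnd]

theorem white_eq_mapRange (Y Z : Diff n) : white Y Z = Z.mapRange (toEnd Y) (map_zero _) := by
  refine Finsupp.ext fun γ => ?_
  simp only [white, toEnd_apply, Finsupp.sum_apply, Finsupp.single_apply, Finsupp.mapRange_apply,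
    Finsupp.sum_ite_eq']
  refine Finsupp.sum_congr fun α _ => ?_
  split_ifs with h
  · rfl
  · simp [Finsupp.notMem_support_iff.mp h]

theorem toEnd_mul_sub_toEnd_white (X Y : Diff n) (hX : IsVect X) :
    toEnd X * toEnd Y - toEnd (white X Y) = toEnd (black X Y) := by
  rw [toEnd_eq_sum X, toEnd_eq_sum Y]
  simp only [white, black, map_finsuppSum, Finsupp.sum_mul]
  simp only [Finsupp.mul_sum]
  rw [← Finsupp.sum_sub]
  refine Finsupp.sum_congr fun α hα => ?_
  obtain ⟨i, rfl⟩ := (Finsupp.sum_eq_one_iff α).mp (hX α hα)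
  rw [← Finsupp.sum_sub]
  refine Finsupp.sum_congr fun β _ => ?_
  refine LinearMap.ext fun w => ?_
  simp only [LinearMap.sub_apply, Module.End.mul_apply, toEnd_single_apply, Dop_add, Dop_single,
    Derivation.coeFn_coe, pderiv_mul]
  ring

end Diff

open Diff

/-- for a vector field `X` and any operators `Y, Z`, the white
associator satisfies `(X,Y,Z)^∘ = (X • Y) ∘ Z`. -/
theorem white_associator_eq {n : ℕ} (X Y Z : Diff n) (hX : IsVect X) :
    white X (white Y Z) - white (white X Y) Z = white (black X Y) Z := by
  refine Finsupp.ext fun γ => ?_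
  simp only [white_eq_mapRange, Finsupp.coe_sub, Pi.sub_apply, Finsupp.mapRange_apply,
    ← toEnd_mul_sub_toEnd_white X Y hX, LinearMap.sub_apply, Module.End.mul_apply]
end

section
/- Let f ∈ ℂ[[x]] with f(0) = 0 and f'(0) ≠ 0, and write f^{⟨−1⟩}(x) = Σ_{n≥1} bₙ xⁿ/n!. Then for every n ≥ 1, bₙ = [((1/f'(x))·d/dx)^{n−1}(1/f'(x))] evaluated at x = 0 (i.e., the constant term of that power series). -/
/-!
Differentiating `f ∘ g = X` by the chain rule gives `g' = (1/f') ∘ g`, and then the chain rule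
again turns differentiation of `h ∘ g` into `(h'/f') ∘ g`. Hence the `n`-th derivative of `g` is
`(((1/f')·d/dx)^{n-1}(1/f')) ∘ g`, and since `g(0) = 0` its constant term is that of
`((1/f')·d/dx)^{n-1}(1/f')`, while the constant term of `g⁽ⁿ⁾` is `n!·[xⁿ] g`.
-/

open PowerSeries

/-- Composition `(g ∘ f)(x) = g(f(x))` of formal power series (meaningful when
`f(0) = 0`): the `n`-th coefficient is `Σ_{k=0}^{n} g_k · [x^n] f^k`. -/
noncomputable def pcomp (g f : PowerSeries ℂ) : PowerSeries ℂ :=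
  PowerSeries.mk fun n =>
    ∑ k ∈ Finset.range (n + 1), (coeff k g) * coeff n (f ^ k)

/-- The operator `h ↦ (1/f'(x))·dh/dx` on formal power series. -/
noncomputable def lagOp (f : PowerSeries ℂ) (h : PowerSeries ℂ) : PowerSeries ℂ :=
  (derivativeFun f)⁻¹ * derivativeFun h

namespace PowerSeries

theorem coeff_pow_eq_zero_of_lt {R : Type*} [CommSemiring R] {g : R⟦X⟧}
    (hg : constantCoeff g = 0) {n k : ℕ} (h : n < k) : coeff n (g ^ k) = 0 :=
  X_pow_dvd_iff.mp (pow_dvd_pow_of_dvd (X_dvd_iff.mpr hg) k) n h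

theorem pcomp_eq_subst {g : ℂ⟦X⟧} (hg : constantCoeff g = 0) (h : ℂ⟦X⟧) :
    pcomp h g = h.subst g := by
  ext n
  rw [pcomp, coeff_mk, coeff_subst' (HasSubst.of_constantCoeff_zero' hg),
    finsum_eq_sum_of_support_subset _ (s := Finset.range (n + 1))]
  · simp only [smul_eq_mul]
  · intro k hk
    contrapose! hk
    rw [Finset.coe_range, Set.mem_Iio, not_lt] at hk
    rw [Function.notMem_support, coeff_pow_eq_zero_of_lt hg (by omega), smul_zero]

theorem constantCoeff_pcomp (h g : ℂ⟦X⟧) : constantCoeff (pcomp h g) = constantCoeff h := by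
  rw [← coeff_zero_eq_constantCoeff_apply, pcomp, coeff_mk]
  simp

theorem derivative_subst_eq_subst_inv_derivative {K : Type*} [Field K] {f g : K⟦X⟧}
    (hg : HasSubst g) (hf : constantCoeff (d⁄dX K f) ≠ 0) (hgf : f.subst g = X) :
    d⁄dX K g = (d⁄dX K f)⁻¹.subst g := by
  have hchain : (d⁄dX K f).subst g * d⁄dX K g = 1 := by
    rw [← derivative_subst hg, hgf, derivative_X]
  have hinv : (d⁄dX K f)⁻¹.subst g * (d⁄dX K f).subst g = 1 := by
    rw [← subst_mul hg, PowerSeries.inv_mul_cancel _ hf, ← coe_substAlgHom hg, map_one]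
  exact (left_inv_eq_right_inv hinv hchain).symm

theorem semiconj_subst_lagOp_derivative {f g : ℂ⟦X⟧} (hg : HasSubst g)
    (hf : constantCoeff (d⁄dX ℂ f) ≠ 0) (hgf : f.subst g = X) :
    Function.Semiconj (subst g) (lagOp f) (d⁄dX ℂ) := fun h => by
  rw [derivative_subst hg, derivative_subst_eq_subst_inv_derivative hg hf hgf, ← subst_mul hg,
    lagOp, mul_comm]
  rfl

end PowerSeries

theorem lagrange_coeff_general (f g : PowerSeries ℂ)
    (hf1 : coeff 1 f ≠ 0)
    (hg0 : constantCoeff g = 0) (hgf : pcomp f g = X)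
    (n : ℕ) (hn : 1 ≤ n) :
    (n.factorial : ℂ) * coeff n g =
      constantCoeff ((lagOp f)^[n - 1] ((derivativeFun f)⁻¹)) := by
  have hg : HasSubst g := .of_constantCoeff_zero' hg0
  have hf : constantCoeff (d⁄dX ℂ f) ≠ 0 := by
    simpa [← coeff_zero_eq_constantCoeff_apply, coeff_derivative] using hf1
  have hsubst : f.subst g = X := by rwa [← pcomp_eq_subst hg0]
  obtain ⟨m, rfl⟩ : ∃ m, n = m + 1 := ⟨n - 1, by omega⟩
  calc ((m + 1).factorial : ℂ) * coeff (m + 1) g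
      = constantCoeff ((d⁄dX ℂ)^[m] (d⁄dX ℂ g)) := by
        rw [← Function.iterate_succ_apply, constantCoeff_iterate_derivative]
    _ = constantCoeff (((lagOp f)^[m] (d⁄dX ℂ f)⁻¹).subst g) := by
        rw [derivative_subst_eq_subst_inv_derivative hg hf hsubst,
          ((semiconj_subst_lagOp_derivative hg hf hsubst).iterate_right m).eq]
    _ = constantCoeff ((lagOp f)^[m + 1 - 1] (d⁄dX ℂ f)⁻¹) := by
        rw [← pcomp_eq_subst hg0, constantCoeff_pcomp, Nat.add_sub_cancel]

/-- if `f^{⟨-1⟩}(x) = Σ_{n≥1} bₙ xⁿ/n!` (so `bₙ = n!·[xⁿ] f^{⟨-1⟩}`),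
then `bₙ = ((1/f')·d/dx)^{n-1}(1/f')` evaluated at `x = 0`. -/
theorem lagrange_coeff (f g : PowerSeries ℂ)
    (hf0 : constantCoeff f = 0) (hf1 : coeff 1 f ≠ 0)
    (hg0 : constantCoeff g = 0) (hgf : pcomp f g = X) (hfg : pcomp g f = X)
    (n : ℕ) (hn : 1 ≤ n) :
    (n.factorial : ℂ) * coeff n g =
      constantCoeff ((lagOp f)^[n - 1] ((derivativeFun f)⁻¹)) :=
  lagrange_coeff_general f g hf1 hg0 hgf n hn
end

section
/- For f(x) = x·e^{−x}, the iterated operator satisfies ((e^x/(1−x))·d/dx)^m (e^x) evaluated at x = 0 equals (m+1)^{m−1} for every m ≥ 0. -/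
open PowerSeries

/-- The formal power series `e^x = Σ_{n≥0} xⁿ/n!`. -/
noncomputable def expS : PowerSeries ℂ := PowerSeries.mk fun n => (n.factorial : ℂ)⁻¹

/-- The operator `h ↦ (e^x/(1-x))·h'(x)` on formal power series. -/
noncomputable def treeOp (h : PowerSeries ℂ) : PowerSeries ℂ :=
  expS * (1 - X)⁻¹ * derivativeFun h

/-!
Substituting `f(x) = x e^{-x}`, whose derivative is `(1 - x) e^{-x}`, conjugates `treeOp` to
`d/dx`: by the chain rule `treeOp (g ∘ f) = g' ∘ f`. Abel's identity
`∑ₖ C(n,k) (k+1)^(k-1) (-k)^(n-k) = 1` says that `E ∘ f = e^x` for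
`E(x) = ∑ (n+1)^(n-1) xⁿ / n!` (this is `e^{T(x)}`, `T` the tree function inverse to `f`).
Hence `treeOp^[m] e^x = E⁽ᵐ⁾ ∘ f`, whose constant term is `E⁽ᵐ⁾(0) = (m+1)^(m-1)`.

Abel's identity is the value at `y = 0` of `Aₙ(y) = ∑ₖ C(n,k) (k+1)^(k-1) (y-k)^(n-k) = (y+1)ⁿ`,
proved by induction: `A'ₙ₊₁ = (n+1) Aₙ`, and `Aₙ₊₁(-1)` is an `(n+1)`-st forward difference of
the degree-`n` polynomial `(y+1)ⁿ`, hence `0`.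
-/

open Finset

namespace Polynomial

noncomputable def abelPoly (n : ℕ) : ℤ[X] :=
  ∑ k ∈ range (n + 1), C ((n.choose k : ℤ) * (k + 1) ^ (k - 1)) * (X - C (k : ℤ)) ^ (n - k)

theorem derivative_abelPoly_succ (n : ℕ) :
    derivative (abelPoly (n + 1)) = C ((n : ℤ) + 1) * abelPoly n := by
  rw [abelPoly, abelPoly, map_sum, sum_range_succ, Nat.sub_self, pow_zero, mul_one,
    derivative_C, add_zero, mul_sum]
  refine sum_congr rfl fun k hk => ?_
  have hkn : k ≤ n := Nat.lt_succ_iff.mp (mem_range.mp hk)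
  have hchoose : ((n + 1).choose k : ℤ) * ((n + 1 - k : ℕ) : ℤ) = ((n : ℤ) + 1) * n.choose k := by
    exact_mod_cast (Nat.choose_mul_succ_eq n k).symm.trans (mul_comm _ _)
  rw [derivative_C_mul, derivative_X_sub_C_pow, show n + 1 - k - 1 = n - k by omega,
    ← mul_assoc, ← C_mul, ← mul_assoc, ← C_mul]
  congr 2
  linear_combination ((k : ℤ) + 1) ^ (k - 1) * hchoose

theorem eval_neg_one_abelPoly_succ (n : ℕ) : (abelPoly (n + 1)).eval (-1) = 0 := by
  have hΔ : (fwdDiff 1)^[n + 1] ((X + 1 : ℤ[X]) ^ n).eval 0 = 0 := by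
    rw [fwdDiff_iter_eq_zero_of_degree_lt (by rw [natDegree_pow, ← C_1, natDegree_X_add_C]; omega)]
    rfl
  rw [fwdDiff_iter_eq_sum_shift] at hΔ
  rw [abelPoly, eval_finsetSum, ← hΔ]
  refine sum_congr rfl fun k hk => ?_
  have hpow : ((k : ℤ) + 1) ^ (k - 1) * ((k : ℤ) + 1) ^ (n + 1 - k) = ((k : ℤ) + 1) ^ n := by
    rcases Nat.eq_zero_or_pos k with rfl | hk0
    · simp
    · rw [← pow_add]
      congr 1
      have := mem_range.mp hk
      omega
  simp only [eval_mul, eval_C, eval_pow, eval_sub, eval_X, eval_add, eval_one, zero_add,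
    smul_eq_mul, nsmul_eq_mul, mul_one]
  rw [show (-1 - (k : ℤ)) = (-1) * ((k : ℤ) + 1) by ring, mul_pow]
  linear_combination (-1 : ℤ) ^ (n + 1 - k) * ((n + 1).choose k : ℤ) * hpow

theorem abelPoly_eq (n : ℕ) : abelPoly n = (X + 1) ^ n := by
  induction n with
  | zero => simp [abelPoly]
  | succ n ih =>
    have hderiv : derivative (abelPoly (n + 1) - (X + 1) ^ (n + 1)) = 0 := by
      simp [derivative_abelPoly_succ, ih, derivative_pow]
    have hconst := eq_C_of_derivative_eq_zero hderiv
    have heval : (abelPoly (n + 1) - (X + 1) ^ (n + 1)).eval (-1) = 0 := by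
      simp [eval_neg_one_abelPoly_succ]
    rw [hconst, eval_C] at heval
    rw [← sub_eq_zero, hconst, heval, C_0]

end Polynomial

theorem abel_identity (n : ℕ) :
    ∑ k ∈ range (n + 1), (n.choose k : ℤ) * (k + 1) ^ (k - 1) * (-k) ^ (n - k) = 1 := by
  simpa [Polynomial.abelPoly, Polynomial.eval_finsetSum] using
    congrArg (Polynomial.eval 0) (Polynomial.abelPoly_eq n)

namespace PowerSeries

theorem derivative_rescale {R : Type*} [CommSemiring R] (a : R) (f : R⟦X⟧) :
    d⁄dX R (rescale a f) = C a * rescale a (d⁄dX R f) := by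
  ext n
  simp only [coeff_derivative, coeff_rescale, coeff_C_mul, pow_succ]
  ring

section Subst

variable {R : Type*} [CommRing R] {f : R⟦X⟧}

theorem coeff_subst_eq_sum_range (hf : constantCoeff f = 0) (g : R⟦X⟧) (n : ℕ) :
    coeff n (g.subst f) = ∑ k ∈ range (n + 1), coeff k g * coeff n (f ^ k) := by
  rw [coeff_subst' (HasSubst.of_constantCoeff_zero' hf)]
  refine finsum_eq_sum_of_support_subset _ fun k hk => ?_
  obtain ⟨h, rfl⟩ := X_dvd_iff.mpr hf
  by_contra hkn
  rw [coe_range, Set.mem_Iio, not_lt] at hkn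
  rw [Function.mem_support, mul_pow, coeff_X_pow_mul', if_neg (by omega), smul_zero] at hk
  exact hk rfl

theorem constantCoeff_subst_of_constantCoeff_eq_zero (hf : constantCoeff f = 0) (g : R⟦X⟧) :
    constantCoeff (g.subst f) = constantCoeff g := by
  rw [← coeff_zero_eq_constantCoeff_apply, coeff_subst_eq_sum_range hf, sum_range_one, pow_zero,
    coeff_zero_one, mul_one, coeff_zero_eq_constantCoeff_apply]

end Subst

end PowerSeries

theorem expS_eq_exp : expS = exp ℂ := by
  ext n
  simp [expS, coeff_exp]

theorem treeOp_eq (h : ℂ⟦X⟧) : treeOp h = exp ℂ * (1 - X)⁻¹ * d⁄dX ℂ h := by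
  rw [treeOp, expS_eq_exp]
  rfl

noncomputable def xExpNeg : ℂ⟦X⟧ := X * evalNegHom (exp ℂ)

theorem constantCoeff_xExpNeg : constantCoeff xExpNeg = 0 := by
  simp [xExpNeg]

theorem coeff_xExpNeg_pow {k n : ℕ} (hkn : k ≤ n) :
    coeff n (xExpNeg ^ k) = (-(k : ℂ)) ^ (n - k) / (n - k).factorial := by
  rw [xExpNeg, mul_pow, ← map_pow, exp_pow_eq_rescale_exp, evalNegHom, rescale_rescale,
    coeff_X_pow_mul', if_pos hkn, coeff_rescale, coeff_exp]
  simp [div_eq_mul_inv]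

theorem derivative_xExpNeg : d⁄dX ℂ xExpNeg = (1 - X) * evalNegHom (exp ℂ) := by
  rw [xExpNeg, Derivation.leibniz, evalNegHom, derivative_rescale, derivative_exp, derivative_X]
  simp only [smul_eq_mul, map_neg, map_one]
  ring

theorem treeOp_subst_xExpNeg (g : ℂ⟦X⟧) :
    treeOp (g.subst xExpNeg) = (d⁄dX ℂ g).subst xExpNeg := by
  have hinv : (1 - X : ℂ⟦X⟧)⁻¹ * (1 - X) = 1 := PowerSeries.inv_mul_cancel _ (by simp)
  calc treeOp (g.subst xExpNeg)
      = (d⁄dX ℂ g).subst xExpNeg * (exp ℂ * evalNegHom (exp ℂ)) * ((1 - X)⁻¹ * (1 - X)) := by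
        rw [treeOp_eq, derivative_subst (HasSubst.of_constantCoeff_zero' constantCoeff_xExpNeg),
          derivative_xExpNeg]
        ring
    _ = (d⁄dX ℂ g).subst xExpNeg := by rw [exp_mul_exp_neg_eq_one, hinv, mul_one, mul_one]

theorem iterate_treeOp_subst_xExpNeg (m : ℕ) (g : ℂ⟦X⟧) :
    treeOp^[m] (g.subst xExpNeg) = ((d⁄dX ℂ)^[m] g).subst xExpNeg :=
  (Function.Semiconj.iterate_right (fun g => (treeOp_subst_xExpNeg g).symm) m g).symm

noncomputable def treeExp : ℂ⟦X⟧ := mk fun n => ((n : ℂ) + 1) ^ (n - 1) / n.factorial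

theorem treeExp_subst_xExpNeg : treeExp.subst xExpNeg = expS := by
  ext n
  have habel : ∑ k ∈ range (n + 1),
      (n.choose k : ℂ) * ((k : ℂ) + 1) ^ (k - 1) * (-(k : ℂ)) ^ (n - k) = 1 := by
    exact_mod_cast abel_identity n
  rw [coeff_subst_eq_sum_range constantCoeff_xExpNeg, expS, coeff_mk,
    ← mul_one (n.factorial : ℂ)⁻¹, ← habel, mul_sum]
  refine sum_congr rfl fun k hk => ?_
  have hkn : k ≤ n := Nat.lt_succ_iff.mp (mem_range.mp hk)
  have hn : (n.factorial : ℂ) ≠ 0 := Nat.cast_ne_zero.mpr n.factorial_ne_zero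
  rw [treeExp, coeff_mk, coeff_xExpNeg_pow hkn, Nat.cast_choose ℂ hkn]
  field_simp

/-- `((e^x/(1-x))·d/dx)^m (e^x)|_{x=0} = (m+1)^{m-1}` for all `m ≥ 0`
(for `m = 0` the exponent `m - 1` is natural subtraction, giving `1 = (0+1)^0`). -/
theorem treeOp_iterate (m : ℕ) :
    constantCoeff (treeOp^[m] expS) = ((m : ℂ) + 1) ^ (m - 1) := by
  rw [← treeExp_subst_xExpNeg, iterate_treeOp_subst_xExpNeg,
    constantCoeff_subst_of_constantCoeff_eq_zero constantCoeff_xExpNeg,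
    constantCoeff_iterate_derivative, treeExp, coeff_mk]
  exact mul_div_cancel₀ _ (Nat.cast_ne_zero.mpr m.factorial_ne_zero)
end
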